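/- arXiv:1510.05811 — 7 statements merged into one kernel-verified Lean document; each statement's English description precedes it below -/
import Mathlib

section
/- Positive definiteness of the loopy Laplacian: if the graph G is connected and at least one shunt value b̂_i is strictly positive, then for every θ ∈ ℝⁿ the symmetric matrix 𝒜(θ) is positive definite. -/
open Real Finset Matrix

/-!
With `c i j = cos (θ i - θ j)`, the quadratic form of `𝒜(θ)` is
`∑ i, b̂ i * x i ^ 2 + ½ ∑ i j, B i j * (x i ^ 2 + x j ^ 2 - 2 * c i j * x i * x j)`, and every
summand is nonnegative because `|c i j| ≤ 1`. For `x ≠ 0`, either `x` does not vanish at a vertex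
with positive shunt, or, by connectedness, some edge `a b` has `x a = 0 ≠ x b`, and its summand is
`B a b * x b ^ 2 / 2 > 0`.
-/

lemma SimpleGraph.Preconnected.exists_adj_mem_not_mem {V : Type*} {G : SimpleGraph V}
    (hG : G.Preconnected) {S : Set V} {u v : V} (hu : u ∈ S) (hv : v ∉ S) :
    ∃ a b, G.Adj a b ∧ a ∈ S ∧ b ∉ S := by
  obtain ⟨p⟩ := hG u v
  obtain ⟨d, -, hd⟩ := p.exists_boundary_dart S hu hv
  exact ⟨d.fst, d.snd, d.adj, hd⟩

lemma sq_add_sq_sub_two_mul_cos_mul_mul_nonneg (a b t : ℝ) :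
    0 ≤ a ^ 2 + b ^ 2 - 2 * cos t * a * b := by
  nlinarith [neg_one_le_cos t, cos_le_one t, sq_nonneg (a - b), sq_nonneg (a + b)]

section LoopyLaplacian

variable {ι : Type*} [Fintype ι] [DecidableEq ι]

noncomputable def loopyLaplacian (B : ι → ι → ℝ) (bhat θ : ι → ℝ) : Matrix ι ι ℝ :=
  of fun i j => if i = j then bhat i + ∑ l ∈ univ.erase i, B i l else -(B i j * cos (θ i - θ j))

variable {B : ι → ι → ℝ} {bhat θ : ι → ℝ}

/-- Since `cos 0 = 1`, the entry `B i i` enters the diagonal on both sides and cancels. -/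
lemma loopyLaplacian_eq_diagonal_sub :
    loopyLaplacian B bhat θ =
      diagonal (fun i => bhat i + ∑ l, B i l) - of fun i j => B i j * cos (θ i - θ j) := by
  ext i j
  by_cases h : i = j
  · subst h
    simp only [loopyLaplacian, of_apply, if_pos, Matrix.sub_apply, diagonal_apply_eq,
      sum_erase_eq_sub (mem_univ _), sub_self, cos_zero, mul_one]
    ring
  · simp [loopyLaplacian, h]

lemma loopyLaplacian_isHermitian (hB : ∀ i j, B i j = B j i) :
    (loopyLaplacian B bhat θ).IsHermitian := by
  rw [loopyLaplacian_eq_diagonal_sub]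
  refine (isHermitian_diagonal _).sub (IsHermitian.ext fun i j => ?_)
  simp [hB i j, ← cos_neg (θ i - θ j)]

lemma dotProduct_loopyLaplacian_mulVec (hB : ∀ i j, B i j = B j i) (x : ι → ℝ) :
    x ⬝ᵥ (loopyLaplacian B bhat θ *ᵥ x) = ∑ i, bhat i * x i ^ 2 +
      ∑ i, ∑ j, B i j * (x i ^ 2 + x j ^ 2 - 2 * cos (θ i - θ j) * x i * x j) / 2 := by
  have hswap : ∑ i, ∑ j, B i j * x j ^ 2 = ∑ i, ∑ j, B i j * x i ^ 2 := by
    rw [sum_comm]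
    simp_rw [hB]
  have hsplit : ∑ i, ∑ j, B i j * (x i ^ 2 + x j ^ 2 - 2 * cos (θ i - θ j) * x i * x j) / 2 =
      (∑ i, ∑ j, B i j * x i ^ 2 + ∑ i, ∑ j, B i j * x j ^ 2) / 2 -
        ∑ i, ∑ j, x i * (B i j * cos (θ i - θ j) * x j) := by
    simp only [← sum_add_distrib, sum_div, ← sum_sub_distrib]
    refine sum_congr rfl fun i _ => sum_congr rfl fun j _ => by ring
  have hdiag : x ⬝ᵥ (diagonal (fun i => bhat i + ∑ l, B i l) *ᵥ x) =
      ∑ i, bhat i * x i ^ 2 + ∑ i, ∑ j, B i j * x i ^ 2 := by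
    simp only [dotProduct, mulVec_diagonal, ← sum_mul, ← sum_add_distrib]
    exact sum_congr rfl fun i _ => by ring
  have hoff : x ⬝ᵥ ((of fun i j => B i j * cos (θ i - θ j)) *ᵥ x) =
      ∑ i, ∑ j, x i * (B i j * cos (θ i - θ j) * x j) := by
    simp only [dotProduct, mulVec, of_apply, mul_sum]
  rw [loopyLaplacian_eq_diagonal_sub, sub_mulVec, dotProduct_sub, hdiag, hoff, hsplit, hswap]
  ring

lemma dotProduct_loopyLaplacian_mulVec_pos_of_shunt (hBsymm : ∀ i j, B i j = B j i)
    (hB : ∀ i j, 0 ≤ B i j) (hbhat : ∀ i, 0 ≤ bhat i) {x : ι → ℝ} {k : ι} (hk : 0 < bhat k)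
    (hxk : x k ≠ 0) : 0 < x ⬝ᵥ (loopyLaplacian B bhat θ *ᵥ x) := by
  rw [dotProduct_loopyLaplacian_mulVec hBsymm]
  refine add_pos_of_pos_of_nonneg
    (sum_pos' (fun i _ => mul_nonneg (hbhat i) (sq_nonneg _)) ⟨k, mem_univ k, by positivity⟩)
    (sum_nonneg fun i _ => sum_nonneg fun j _ => ?_)
  exact div_nonneg (mul_nonneg (hB i j) (sq_add_sq_sub_two_mul_cos_mul_mul_nonneg _ _ _))
    zero_le_two

lemma dotProduct_loopyLaplacian_mulVec_pos_of_edge (hBsymm : ∀ i j, B i j = B j i)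
    (hB : ∀ i j, 0 ≤ B i j) (hbhat : ∀ i, 0 ≤ bhat i) {x : ι → ℝ} {a b : ι} (hab : 0 < B a b)
    (ha : x a = 0) (hb : x b ≠ 0) : 0 < x ⬝ᵥ (loopyLaplacian B bhat θ *ᵥ x) := by
  rw [dotProduct_loopyLaplacian_mulVec hBsymm]
  have hterm : ∀ i j, 0 ≤ B i j * (x i ^ 2 + x j ^ 2 - 2 * cos (θ i - θ j) * x i * x j) / 2 :=
    fun i j => div_nonneg
      (mul_nonneg (hB i j) (sq_add_sq_sub_two_mul_cos_mul_mul_nonneg _ _ _)) zero_le_two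
  have hab_term : 0 < B a b * (x a ^ 2 + x b ^ 2 - 2 * cos (θ a - θ b) * x a * x b) / 2 := by
    simpa [ha] using (by positivity : 0 < B a b * x b ^ 2 / 2)
  exact add_pos_of_nonneg_of_pos (sum_nonneg fun i _ => mul_nonneg (hbhat i) (sq_nonneg _))
    (sum_pos' (fun i _ => sum_nonneg fun j _ => hterm i j)
      ⟨a, mem_univ a, sum_pos' (fun j _ => hterm a j) ⟨b, mem_univ b, hab_term⟩⟩)

end LoopyLaplacian

theorem loopy_laplacian_posDef_general
    (n : ℕ) (G : SimpleGraph (Fin n))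
    (hconn : G.Connected)
    (B : Fin n → Fin n → ℝ)
    (hBsymm : ∀ i j, B i j = B j i)
    (hBpos : ∀ i j, G.Adj i j → 0 < B i j)
    (hBzero : ∀ i j, ¬ G.Adj i j → B i j = 0)
    (bhat : Fin n → ℝ)
    (hbhat : ∀ i, 0 ≤ bhat i)
    (hone : ∃ i, 0 < bhat i)
    (θ : Fin n → ℝ) :
    (Matrix.of fun i j =>
      if i = j then bhat i + ∑ l ∈ Finset.univ.erase i, B i l
      else -(B i j * Real.cos (θ i - θ j))).PosDef := by
  change (loopyLaplacian B bhat θ).PosDef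
  have hB : ∀ i j, 0 ≤ B i j := by
    intro i j
    by_cases h : G.Adj i j
    exacts [(hBpos i j h).le, (hBzero i j h).ge]
  refine posDef_iff_dotProduct_mulVec.2 ⟨loopyLaplacian_isHermitian hBsymm, fun x hx => ?_⟩
  rw [star_trivial]
  obtain ⟨k, hk⟩ := hone
  by_cases hxk : x k = 0
  · obtain ⟨v, hv⟩ := Function.ne_iff.1 hx
    obtain ⟨a, b, hab, ha, hb⟩ :=
      hconn.preconnected.exists_adj_mem_not_mem (S := {i | x i = 0}) hxk hv
    exact dotProduct_loopyLaplacian_mulVec_pos_of_edge hBsymm hB hbhat (hBpos a b hab) ha hb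
  · exact dotProduct_loopyLaplacian_mulVec_pos_of_shunt hBsymm hB hbhat hk hxk

/-- Positive definiteness of the loopy Laplacian: if the graph `G` is
connected and at least one shunt value `b̂ i` is strictly positive, then for every
`θ ∈ ℝⁿ` the symmetric matrix `𝒜(θ)` is positive definite. -/
theorem loopy_laplacian_posDef
    (n : ℕ) (G : SimpleGraph (Fin n)) [DecidableRel G.Adj]
    (hconn : G.Connected)
    (B : Fin n → Fin n → ℝ)
    (hBsymm : ∀ i j, B i j = B j i)
    (hBpos : ∀ i j, G.Adj i j → 0 < B i j)
    (hBzero : ∀ i j, ¬ G.Adj i j → B i j = 0)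
    (bhat : Fin n → ℝ)
    (hbhat : ∀ i, 0 ≤ bhat i)
    (hone : ∃ i, 0 < bhat i)
    (θ : Fin n → ℝ) :
    (Matrix.of fun i j =>
      if i = j then bhat i + ∑ l ∈ Finset.univ.erase i, B i l
      else -(B i j * Real.cos (θ i - θ j))).PosDef :=
  loopy_laplacian_posDef_general n G hconn B hBsymm hBpos hBzero bhat hbhat hone θ
end

section
/- Incremental cyclo-dissipativity of the conventional droop controller (Theorem 1, item 1): let (θ̄, ω̄, V̄) satisfy V̄ ∈ ℝⁿ_{>0} and ω̄ = ω⁰·1 for some ω⁰ ∈ ℝ, put P̄ := P(θ̄,V̄), Q̄ := Q(θ̄,V̄), let ū_P ∈ ℝⁿ satisfy 0 = −(ω̄ − ω*) − K_P(P̄ − P*) + ū_P, and set ū_Q := V̄ + K_Q Q̄. Then for every θ ∈ ℝⁿ, ω ∈ ℝⁿ, V ∈ ℝⁿ_{>0} and u_P, u_Q ∈ ℝⁿ, defining g ∈ ℝⁿ by g_i = (V_i + (k_Q)_i Q_i(θ,V) − (ū_Q)_i) / ((k_Q)_i V_i), the following identity holds: (P(θ,V) − P̄)ᵀ ω + (ω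 − ω̄)ᵀ K_P⁻¹ (−(ω − ω*) − K_P(P(θ,V) − P*) + u_P) + gᵀ T_Q⁻¹ (−V − K_Q Q(θ,V) + u_Q) = −(ω − ω̄)ᵀ K_P⁻¹ (ω − ω̄) + (ω − ω̄)ᵀ K_P⁻¹ (u_P − ū_P) − gᵀ T_Q⁻¹ K_Q [V] g + gᵀ T_Q⁻¹ (u_Q − ū_Q). -/
/-! Because the line weights are symmetric the lines are lossless: the active powers sum to zero
at every operating point, so the cross term `(P - P̄)ᵀ ω̄` vanishes when `ω̄` is a common frequency.
What is left splits node by node. Subtracting the equilibrium equation for `ū_P` writes the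
frequency dynamics in increments, and its `-(P - P̄)` term cancels `(P - P̄)ᵀ (ω - ω̄)`; the
definition of `g` turns `-V - K_Q Q + u_Q` into `-K_Q [V] g + (u_Q - ū_Q)`. -/

open Real Finset Matrix

/-- `B_ii = b̂_i + ∑_{j ≠ i} B_ij`. -/
noncomputable def Bdiag (n : ℕ) (B : Fin n → Fin n → ℝ) (bhat : Fin n → ℝ) (i : Fin n) : ℝ :=
  bhat i + ∑ j ∈ Finset.univ.erase i, B i j

/-- Active power `P_i(θ,V) = ∑_{j ≠ i} B_ij V_i V_j sin(θ_i − θ_j)`. -/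
noncomputable def activeP (n : ℕ) (B : Fin n → Fin n → ℝ) (θ V : Fin n → ℝ) (i : Fin n) : ℝ :=
  ∑ j ∈ Finset.univ.erase i, B i j * V i * V j * Real.sin (θ i - θ j)

/-- Reactive power `Q_i(θ,V) = B_ii V_i² − ∑_{j ≠ i} B_ij V_i V_j cos(θ_i − θ_j)`. -/
noncomputable def reactiveQ (n : ℕ) (B : Fin n → Fin n → ℝ) (bhat : Fin n → ℝ)
    (θ V : Fin n → ℝ) (i : Fin n) : ℝ :=
  Bdiag n B bhat i * V i ^ 2
    - ∑ j ∈ Finset.univ.erase i, B i j * V i * V j * Real.cos (θ i - θ j)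

theorem Finset.sum_sum_erase_eq_zero_of_antisymm {ι M : Type*} [Fintype ι] [DecidableEq ι]
    [AddCommGroup M] [IsAddTorsionFree M] {f : ι → ι → M} (hf : ∀ i j, f i j = -f j i) :
    ∑ i, ∑ j ∈ univ.erase i, f i j = 0 := by
  simp only [sum_erase _ (self_eq_neg.mp (hf _ _))]
  refine self_eq_neg.mp ?_
  calc ∑ i, ∑ j, f i j = ∑ i, ∑ j, f j i := sum_comm
    _ = ∑ i, ∑ j, -f i j := by simp only [← hf]
    _ = -∑ i, ∑ j, f i j := by simp only [sum_neg_distrib]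

theorem sum_activeP_eq_zero {n : ℕ} {B : Fin n → Fin n → ℝ} (hB : ∀ i j, B i j = B j i)
    (θ V : Fin n → ℝ) : ∑ i, activeP n B θ V i = 0 :=
  sum_sum_erase_eq_zero_of_antisymm fun i j => by
    rw [hB i j, show θ i - θ j = -(θ j - θ i) by ring, sin_neg]
    ring

theorem active_droop_identity {K : Type*} [Field K] {k p p' ω ω' ωs Ps u u' : K} (hk : k ≠ 0)
    (hu' : 0 = -(ω' - ωs) - k * (p' - Ps) + u') :
    (p - p') * ω + (ω - ω') * k⁻¹ * (-(ω - ωs) - k * (p - Ps) + u)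
      = (p - p') * ω' + (-((ω - ω') * k⁻¹ * (ω - ω')) + (ω - ω') * k⁻¹ * (u - u')) := by
  linear_combination (-(ω - ω') * k⁻¹) * hu' + (ω - ω') * (p' - p) * mul_inv_cancel₀ hk

theorem reactive_droop_identity {K : Type*} [Field K] {k V q u u' g t : K} (hk : k ≠ 0)
    (hV : V ≠ 0) (hg : g = (V + k * q - u') / (k * V)) :
    g * t * (-V - k * q + u) = -(g * t * (k * V) * g) + g * t * (u - u') := by
  have hkVg : k * V * g = V + k * q - u' := by
    rw [hg]
    field_simp
  linear_combination (g * t) * hkVg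

theorem droop_incremental_cyclo_dissipativity_general
    (n : ℕ)
    (B : Fin n → Fin n → ℝ)
    (hBsymm : ∀ i j, B i j = B j i)
    (bhat : Fin n → ℝ)
    (kP TQ kQ : Fin n → ℝ)
    (hkP : ∀ i, 0 < kP i) (hkQ : ∀ i, 0 < kQ i)
    (ωstar Pstar : Fin n → ℝ)
    (θbar ωbar Vbar : Fin n → ℝ) (ω0 : ℝ)
    (hωbar : ωbar = fun _ => ω0)
    (uPbar uQbar : Fin n → ℝ)
    (huPbar : ∀ i, 0 = -(ωbar i - ωstar i)
        - kP i * (activeP n B θbar Vbar i - Pstar i) + uPbar i)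
    (θ ω V uP uQ : Fin n → ℝ) (hV : ∀ i, 0 < V i)
    (g : Fin n → ℝ)
    (hg : ∀ i, g i = (V i + kQ i * reactiveQ n B bhat θ V i - uQbar i) / (kQ i * V i)) :
    ∑ i, (activeP n B θ V i - activeP n B θbar Vbar i) * ω i
      + ∑ i, (ω i - ωbar i) * (kP i)⁻¹
          * (-(ω i - ωstar i) - kP i * (activeP n B θ V i - Pstar i) + uP i)
      + ∑ i, g i * (TQ i)⁻¹ * (-(V i) - kQ i * reactiveQ n B bhat θ V i + uQ i)
    =
    -∑ i, (ω i - ωbar i) * (kP i)⁻¹ * (ω i - ωbar i)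
      + ∑ i, (ω i - ωbar i) * (kP i)⁻¹ * (uP i - uPbar i)
      - ∑ i, g i * (TQ i)⁻¹ * (kQ i * V i) * g i
      + ∑ i, g i * (TQ i)⁻¹ * (uQ i - uQbar i) := by
  have hbalance : ∑ i, (activeP n B θ V i - activeP n B θbar Vbar i) * ωbar i = 0 := by
    simp only [hωbar, ← sum_mul, sum_sub_distrib, sum_activeP_eq_zero hBsymm, sub_self, zero_mul]
  rw [← sum_add_distrib,
    sum_congr rfl fun i _ => active_droop_identity (hkP i).ne' (huPbar i),
    sum_congr rfl fun i _ => reactive_droop_identity (hkQ i).ne' (hV i).ne' (hg i)]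
  simp only [sum_add_distrib, sum_neg_distrib, hbalance]
  ring

/-- Incremental cyclo-dissipativity of the conventional droop controller
(Theorem 1, item 1). -/
theorem droop_incremental_cyclo_dissipativity
    (n : ℕ) (G : SimpleGraph (Fin n)) [DecidableRel G.Adj]
    (hconn : G.Connected)
    (B : Fin n → Fin n → ℝ)
    (hBsymm : ∀ i j, B i j = B j i)
    (hBpos : ∀ i j, G.Adj i j → 0 < B i j)
    (hBzero : ∀ i j, ¬ G.Adj i j → B i j = 0)
    (bhat : Fin n → ℝ) (hbhat : ∀ i, 0 ≤ bhat i)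
    (kP TP TQ kQ : Fin n → ℝ)
    (hkP : ∀ i, 0 < kP i) (hTP : ∀ i, 0 < TP i)
    (hTQ : ∀ i, 0 < TQ i) (hkQ : ∀ i, 0 < kQ i)
    (ωstar Pstar : Fin n → ℝ)
    (θbar ωbar Vbar : Fin n → ℝ) (ω0 : ℝ)
    (hVbar : ∀ i, 0 < Vbar i)
    (hωbar : ωbar = fun _ => ω0)
    (uPbar uQbar : Fin n → ℝ)
    (huPbar : ∀ i, 0 = -(ωbar i - ωstar i)
        - kP i * (activeP n B θbar Vbar i - Pstar i) + uPbar i)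
    (huQbar : uQbar = fun i => Vbar i + kQ i * reactiveQ n B bhat θbar Vbar i)
    (θ ω V uP uQ : Fin n → ℝ) (hV : ∀ i, 0 < V i)
    (g : Fin n → ℝ)
    (hg : ∀ i, g i = (V i + kQ i * reactiveQ n B bhat θ V i - uQbar i) / (kQ i * V i)) :
    ∑ i, (activeP n B θ V i - activeP n B θbar Vbar i) * ω i
      + ∑ i, (ω i - ωbar i) * (kP i)⁻¹
          * (-(ω i - ωstar i) - kP i * (activeP n B θ V i - Pstar i) + uP i)
      + ∑ i, g i * (TQ i)⁻¹ * (-(V i) - kQ i * reactiveQ n B bhat θ V i + uQ i)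
    =
    -∑ i, (ω i - ωbar i) * (kP i)⁻¹ * (ω i - ωbar i)
      + ∑ i, (ω i - ωbar i) * (kP i)⁻¹ * (uP i - uPbar i)
      - ∑ i, g i * (TQ i)⁻¹ * (kQ i * V i) * g i
      + ∑ i, g i * (TQ i)⁻¹ * (uQ i - uQbar i) :=
  droop_incremental_cyclo_dissipativity_general n B hBsymm bhat kP TQ kQ hkP hkQ ωstar Pstar θbar
    ωbar Vbar ω0 hωbar uPbar uQbar huPbar θ ω V uP uQ hV g hg
end

section
/- Strict convexity of the Bregman storage function (Proposition 1): let V̄ ∈ ℝⁿ_{>0}, φ̄ ∈ ℝ^{n−1}, h ∈ ℝⁿ, and set η̄ := D₁ᵀ φ̄, assuming η̄_k ∈ (−π/2, π/2) for every edge k. For each node i put m_ii := b̂_i + Σ_{ℓ : {i,ℓ}∈E} B_iℓ (1 − (V̄_ℓ/V̄_i)·sin²(η̄_{k(i,ℓ)})/cos(η̄_{k(i,ℓ)})) + h_i, where k(i,ℓ) denotes the edge index of {i,ℓ}. If m_ii > Σ_{ℓ : {i,ℓ}∈E} B_iℓ / cos(η̄_{k(i,ℓ)}) for all i = 1,…,n,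 then the symmetric ((n−1)+n+n)-dimensional block matrix H := [[D₁ Γ(V̄) [cos η̄] D₁ᵀ, 0, D₁ [sin η̄] Γ(V̄) |D|ᵀ [V̄]⁻¹], [0, K_P⁻¹ T_P, 0], [[V̄]⁻¹ |D| Γ(V̄) [sin η̄] D₁ᵀ, 0, 𝒜(cos η̄) + diag(h)]] is positive definite, where 𝒜(cos η̄) is the symmetric n×n matrix with diagonal entries B_ii and off-diagonal entries −B_ij cos(η̄_{k(i,j)}) for {i,j} ∈ E (and 0 otherwise). -/
open Real Finset Matrix

namespace MicrogridHessian

variable {n m : ℕ}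

/-- Incidence matrix `D` of the oriented graph: column `k` has `+1` in row `e1 k`
and `−1` in row `e2 k`. -/
def Dmat (e1 e2 : Fin m → Fin (n + 1)) : Matrix (Fin (n + 1)) (Fin m) ℝ :=
  Matrix.of fun i k => if e1 k = i then 1 else if e2 k = i then -1 else 0

/-- Entrywise absolute value `|D|` of the incidence matrix. -/
def absD (e1 e2 : Fin m → Fin (n + 1)) : Matrix (Fin (n + 1)) (Fin m) ℝ :=
  Matrix.of fun i k => if e1 k = i ∨ e2 k = i then 1 else 0

/-- `D₁`: the incidence matrix with its last row deleted. -/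
def D1 (e1 e2 : Fin m → Fin (n + 1)) : Matrix (Fin n) (Fin m) ℝ :=
  Matrix.of fun i k => Dmat e1 e2 i.castSucc k

/-- `η̄ := D₁ᵀ φ̄`. -/
noncomputable def etabar (e1 e2 : Fin m → Fin (n + 1)) (φbar : Fin n → ℝ) : Fin m → ℝ :=
  (D1 e1 e2)ᵀ *ᵥ φbar

/-- `Γ(V)`: diagonal with entries `B_ij V_i V_j` for edge `k ∼ {i,j}`. -/
def Γmat (e1 e2 : Fin m → Fin (n + 1)) (w : Fin m → ℝ) (V : Fin (n + 1) → ℝ) :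
    Matrix (Fin m) (Fin m) ℝ :=
  Matrix.diagonal fun k => w k * V (e1 k) * V (e2 k)

/-- `B_ii = b̂_i + ∑_{edges k incident to i} w k`. -/
def Bii (e1 e2 : Fin m → Fin (n + 1)) (w : Fin m → ℝ) (bhat : Fin (n + 1) → ℝ)
    (i : Fin (n + 1)) : ℝ :=
  bhat i + ∑ k, if e1 k = i ∨ e2 k = i then w k else 0

/-- `𝒜(cos η̄)`: diagonal entries `B_ii`, off-diagonal entries `−B_ij cos η̄_{k(i,j)}`
for `{i,j} ∈ E` and `0` otherwise. -/
noncomputable def Amat (e1 e2 : Fin m → Fin (n + 1)) (w : Fin m → ℝ) (bhat : Fin (n + 1) → ℝ)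
    (η : Fin m → ℝ) : Matrix (Fin (n + 1)) (Fin (n + 1)) ℝ :=
  Matrix.of fun i j =>
    if i = j then Bii e1 e2 w bhat i
    else -∑ k, (if (e1 k = i ∧ e2 k = j) ∨ (e1 k = j ∧ e2 k = i)
      then w k * Real.cos (η k) else 0)

/-- The other endpoint of the edge `k` incident to node `i`. -/
def other (e1 e2 : Fin m → Fin (n + 1)) (k : Fin m) (i : Fin (n + 1)) : Fin (n + 1) :=
  if e1 k = i then e2 k else e1 k

/-- The big `((n−1)+n+n)`-dimensional Hessian block matrix of the Bregman storage
function (here with `n+1` nodes). -/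
noncomputable def bigHessian (e1 e2 : Fin m → Fin (n + 1)) (w : Fin m → ℝ)
    (bhat h : Fin (n + 1) → ℝ) (kP TP : Fin (n + 1) → ℝ)
    (Vbar : Fin (n + 1) → ℝ) (φbar : Fin n → ℝ) :
    Matrix (Fin n ⊕ (Fin (n + 1) ⊕ Fin (n + 1)))
      (Fin n ⊕ (Fin (n + 1) ⊕ Fin (n + 1))) ℝ :=
  Matrix.fromBlocks
    (D1 e1 e2 * Γmat e1 e2 w Vbar
      * Matrix.diagonal (fun k => Real.cos (etabar e1 e2 φbar k)) * (D1 e1 e2)ᵀ)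
    (Matrix.fromCols 0
      (D1 e1 e2 * Matrix.diagonal (fun k => Real.sin (etabar e1 e2 φbar k))
        * Γmat e1 e2 w Vbar * (absD e1 e2)ᵀ * Matrix.diagonal fun i => (Vbar i)⁻¹))
    (Matrix.fromRows 0
      (Matrix.diagonal (fun i => (Vbar i)⁻¹) * absD e1 e2 * Γmat e1 e2 w Vbar
        * Matrix.diagonal (fun k => Real.sin (etabar e1 e2 φbar k)) * (D1 e1 e2)ᵀ))
    (Matrix.fromBlocks (Matrix.diagonal fun i => (kP i)⁻¹ * TP i) 0 0
      (Amat e1 e2 w bhat (etabar e1 e2 φbar) + Matrix.diagonal h))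

end MicrogridHessian

open MicrogridHessian

/-!
Write a vector as `(x, t, z)` along the three blocks. The quadratic form of the Hessian splits
over the edges: the edge `k = {i, j}` with `γ = B_ij V̄_i V̄_j`, `δ = (D₁ᵀ x)_k` and
`a = z_i / V̄_i + z_j / V̄_j` contributes
`γ cos η̄_k δ² + 2 γ sin η̄_k δ a + B_ij (z_i² + z_j² - 2 cos η̄_k z_i z_j)`.
Completing the square in `δ` and using `cos η̄ + sin² η̄ / cos η̄ = 1 / cos η̄` rewrites this as
`γ cos η̄_k (δ + tan η̄_k a)² + (B_ij / cos η̄_k) (z_i - z_j)²` plus multiples of `z_i²` and `z_j²`;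
summed over the edges, these diagonal terms combine with `b̂ + h` into
`(m_ii - Σ_ℓ B_iℓ / cos η̄) z_i²`. So the form is a sum of nonnegative terms, and it vanishes
only if `z = 0`, `t = 0` and `D₁ᵀ x = 0`; the last forces `x = 0` because the graph is connected.
-/

namespace MicrogridHessian

section BlockQuadraticForms

variable {R ι κ ν μ : Type*} [CommSemiring R]

theorem dotProduct_mul_diagonal_mul_transpose_mulVec [Fintype ι] [Fintype κ] [Fintype μ]
    [DecidableEq μ] (M : Matrix ι μ R) (d : μ → R) (N : Matrix κ μ R) (x : ι → R) (y : κ → R) :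
    x ⬝ᵥ (M * diagonal d * Nᵀ) *ᵥ y = ∑ k, d k * (Mᵀ *ᵥ x) k * (Nᵀ *ᵥ y) k := by
  rw [← mulVec_mulVec, dotProduct_mulVec, ← mulVec_transpose, transpose_mul, diagonal_transpose,
    ← mulVec_mulVec]
  simp only [dotProduct, mulVec_diagonal]

theorem dotProduct_diagonal_mulVec [Fintype ι] [DecidableEq ι] (d x : ι → R) :
    x ⬝ᵥ diagonal d *ᵥ x = ∑ i, d i * x i ^ 2 := by
  simp only [dotProduct, mulVec_diagonal]
  exact Finset.sum_congr rfl fun i _ => by ring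

theorem dotProduct_fromBlocks_mulVec [Fintype ι] [Fintype κ] [Fintype ν] (A : Matrix ι ι R)
    (B : Matrix ι κ R) (C : Matrix κ ι R) (P : Matrix ν ν R) (D : Matrix κ κ R) (x : ι → R)
    (t : ν → R) (z : κ → R) :
    Sum.elim x (Sum.elim t z) ⬝ᵥ
        fromBlocks A (fromCols 0 B) (fromRows 0 C) (fromBlocks P 0 0 D) *ᵥ
          Sum.elim x (Sum.elim t z)
      = x ⬝ᵥ A *ᵥ x + x ⬝ᵥ B *ᵥ z + z ⬝ᵥ C *ᵥ x + t ⬝ᵥ P *ᵥ t + z ⬝ᵥ D *ᵥ z := by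
  simp only [fromBlocks_mulVec, fromCols_mulVec_sumElim, fromRows_mulVec,
    sumElim_dotProduct_sumElim, zero_mulVec, zero_add, add_zero, dotProduct_add, dotProduct_zero,
    Sum.elim_comp_inl, Sum.elim_comp_inr]
  ring

theorem isSymm_mul_diagonal_mul_transpose [Fintype μ] [DecidableEq μ] (M : Matrix ι μ R)
    (d : μ → R) : (M * diagonal d * Mᵀ).IsSymm := by
  simp [IsSymm, transpose_mul, Matrix.mul_assoc]

end BlockQuadraticForms

section WeightedSumsOfSquares

variable {R ι : Type*} [CommRing R] [LinearOrder R] [IsStrictOrderedRing R] [Fintype ι]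

theorem sum_mul_sq_nonneg {a : ι → R} (ha : ∀ i, 0 ≤ a i) (x : ι → R) :
    0 ≤ ∑ i, a i * x i ^ 2 :=
  Finset.sum_nonneg fun i _ => mul_nonneg (ha i) (sq_nonneg _)

theorem sum_mul_sq_pos {a x : ι → R} (ha : ∀ i, 0 < a i) (hx : x ≠ 0) :
    0 < ∑ i, a i * x i ^ 2 := by
  obtain ⟨i, hi⟩ := Function.ne_iff.mp hx
  exact Finset.sum_pos' (fun j _ => mul_nonneg (ha j).le (sq_nonneg _))
    ⟨i, Finset.mem_univ i, mul_pos (ha i) (sq_pos_iff.mpr hi)⟩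

end WeightedSumsOfSquares

theorem _root_.SimpleGraph.Reachable.apply_eq_of_forall_adj {V β : Type*} {G : SimpleGraph V}
    {f : V → β} (hf : ∀ a b, G.Adj a b → f a = f b) {a b : V} (h : G.Reachable a b) :
    f a = f b := by
  obtain ⟨p⟩ := h
  induction p with
  | nil => rfl
  | cons hadj _ ih => exact (hf _ _ hadj).trans ih

section Incidence

variable {n m : ℕ} {e1 e2 : Fin m → Fin (n + 1)}

theorem sum_ite_incident {R : Type*} [AddCommMonoid R] {k : Fin m} (hk : e1 k ≠ e2 k)
    (g : Fin (n + 1) → R) :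
    ∑ i, (if e1 k = i ∨ e2 k = i then g i else 0) = g (e1 k) + g (e2 k) := by
  have hmem : ∀ i, (e1 k = i ∨ e2 k = i) ↔ i ∈ ({e1 k, e2 k} : Finset (Fin (n + 1))) := by
    simp [eq_comm]
  simp_rw [hmem, Finset.sum_ite_mem, Finset.univ_inter, Finset.sum_pair hk]

theorem sum_sum_ite_incident {R : Type*} [AddCommMonoid R] (hloop : ∀ k, e1 k ≠ e2 k)
    (f : Fin m → Fin (n + 1) → R) :
    ∑ i, ∑ k, (if e1 k = i ∨ e2 k = i then f k i else 0) = ∑ k, (f k (e1 k) + f k (e2 k)) := by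
  rw [Finset.sum_comm]
  exact Finset.sum_congr rfl fun k _ => sum_ite_incident (hloop k) (f k)

theorem other_left (k : Fin m) : other e1 e2 k (e1 k) = e2 k := if_pos rfl

theorem other_right {k : Fin m} (hk : e1 k ≠ e2 k) : other e1 e2 k (e2 k) = e1 k := if_neg hk

theorem absD_transpose_mulVec {k : Fin m} (hk : e1 k ≠ e2 k) (u : Fin (n + 1) → ℝ) :
    ((absD e1 e2)ᵀ *ᵥ u) k = u (e1 k) + u (e2 k) := by
  rw [← sum_ite_incident hk]
  simp [mulVec, dotProduct, absD, ite_mul]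

theorem Dmat_transpose_mulVec {k : Fin m} (hk : e1 k ≠ e2 k) (u : Fin (n + 1) → ℝ) :
    ((Dmat e1 e2)ᵀ *ᵥ u) k = u (e1 k) - u (e2 k) := by
  have hsplit : ∀ i, Dmat e1 e2 i k * u i
      = (if e1 k = i then u i else 0) + (if e2 k = i then -u i else 0) := by
    intro i
    by_cases h1 : e1 k = i
    · simp [Dmat, h1, show e2 k ≠ i from h1 ▸ hk.symm]
    · by_cases h2 : e2 k = i <;> simp [Dmat, h1, h2]
  simp [mulVec, dotProduct, hsplit, Finset.sum_add_distrib, sub_eq_add_neg]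

theorem D1_transpose_mulVec {k : Fin m} (hk : e1 k ≠ e2 k) (x : Fin n → ℝ) :
    ((D1 e1 e2)ᵀ *ᵥ x) k
      = (Fin.snoc x 0 : Fin (n + 1) → ℝ) (e1 k) - (Fin.snoc x 0 : Fin (n + 1) → ℝ) (e2 k) := by
  rw [← Dmat_transpose_mulVec hk]
  simp [mulVec, dotProduct, D1, Fin.sum_univ_castSucc]

theorem eq_zero_of_D1_transpose_mulVec_eq_zero (hloop : ∀ k, e1 k ≠ e2 k)
    (hconn : (SimpleGraph.fromRel fun i j => ∃ k, e1 k = i ∧ e2 k = j).Connected)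
    {x : Fin n → ℝ} (hx : (D1 e1 e2)ᵀ *ᵥ x = 0) : x = 0 := by
  set u : Fin (n + 1) → ℝ := Fin.snoc x 0
  have hedge : ∀ k, u (e1 k) = u (e2 k) := fun k =>
    sub_eq_zero.mp <| (D1_transpose_mulVec (hloop k) x).symm.trans (congrFun hx k)
  have hadj : ∀ a b, (SimpleGraph.fromRel fun i j => ∃ k, e1 k = i ∧ e2 k = j).Adj a b →
      u a = u b := by
    rintro a b ⟨-, ⟨k, rfl, rfl⟩ | ⟨k, rfl, rfl⟩⟩
    exacts [hedge k, (hedge k).symm]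
  funext i
  simpa [u] using (hconn.preconnected i.castSucc (Fin.last n)).apply_eq_of_forall_adj hadj

theorem sum_ite_adjacent {R : Type*} [AddCommMonoid R] {k : Fin m} (hk : e1 k ≠ e2 k)
    (g : Fin (n + 1) → R) (i : Fin (n + 1)) :
    ∑ j, (if (e1 k = i ∧ e2 k = j) ∨ (e1 k = j ∧ e2 k = i) then g j else 0)
      = if e1 k = i ∨ e2 k = i then g (other e1 e2 k i) else 0 := by
  by_cases h1 : e1 k = i
  · subst h1
    simp [other_left, hk.symm]
  · by_cases h2 : e2 k = i
    · subst h2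
      simp [other, h1]
    · simp [h1, h2]

theorem Amat_mulVec_apply (hloop : ∀ k, e1 k ≠ e2 k) (w : Fin m → ℝ) (bhat : Fin (n + 1) → ℝ)
    (η : Fin m → ℝ) (z : Fin (n + 1) → ℝ) (i : Fin (n + 1)) :
    (Amat e1 e2 w bhat η *ᵥ z) i = Bii e1 e2 w bhat i * z i
      - ∑ k, if e1 k = i ∨ e2 k = i then w k * cos (η k) * z (other e1 e2 k i) else 0 := by
  have hentry : ∀ j, Amat e1 e2 w bhat η i j * z j
      = (if i = j then Bii e1 e2 w bhat i * z i else 0)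
        - ∑ k, if (e1 k = i ∧ e2 k = j) ∨ (e1 k = j ∧ e2 k = i)
          then w k * cos (η k) * z j else 0 := by
    intro j
    by_cases hij : i = j
    · subst hij
      have hnot : ∀ k, ¬(e1 k = i ∧ e2 k = i) := fun k hk => hloop k (hk.1.trans hk.2.symm)
      simp [Amat, hnot]
    · simp [Amat, hij, Finset.sum_mul, ite_mul]
  simp only [mulVec, dotProduct, hentry, Finset.sum_sub_distrib, Finset.sum_ite_eq,
    Finset.mem_univ, if_true]
  rw [Finset.sum_comm]
  simp only [sum_ite_adjacent (hloop _)]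

theorem dotProduct_Amat_mulVec (hloop : ∀ k, e1 k ≠ e2 k) (w : Fin m → ℝ)
    (bhat : Fin (n + 1) → ℝ) (η : Fin m → ℝ) (z : Fin (n + 1) → ℝ) :
    z ⬝ᵥ Amat e1 e2 w bhat η *ᵥ z = ∑ i, bhat i * z i ^ 2
      + ∑ k, w k * (z (e1 k) ^ 2 + z (e2 k) ^ 2 - 2 * cos (η k) * z (e1 k) * z (e2 k)) := by
  have hB : ∑ i, z i * (Bii e1 e2 w bhat i * z i)
      = ∑ i, bhat i * z i ^ 2 + ∑ k, (w k * z (e1 k) ^ 2 + w k * z (e2 k) ^ 2) := by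
    rw [← sum_sum_ite_incident hloop fun k i => w k * z i ^ 2, ← Finset.sum_add_distrib]
    refine Finset.sum_congr rfl fun i _ => ?_
    rw [show z i * (Bii e1 e2 w bhat i * z i) = Bii e1 e2 w bhat i * z i ^ 2 by ring, Bii,
      add_mul, Finset.sum_mul]
    simp only [ite_mul, zero_mul]
  have hoff : ∑ i, z i * ∑ k, (if e1 k = i ∨ e2 k = i
        then w k * cos (η k) * z (other e1 e2 k i) else 0)
      = ∑ k, (w k * cos (η k) * z (e2 k) * z (e1 k) + w k * cos (η k) * z (e1 k) * z (e2 k)) := by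
    simp only [Finset.mul_sum, mul_ite, mul_zero]
    rw [sum_sum_ite_incident hloop]
    refine Finset.sum_congr rfl fun k _ => ?_
    rw [other_left, other_right (hloop k)]
    ring
  simp only [dotProduct, Amat_mulVec_apply hloop, mul_sub, Finset.sum_sub_distrib]
  rw [hoff, hB, add_sub_assoc, ← Finset.sum_sub_distrib, ← Finset.sum_sub_distrib]
  exact congrArg _ (Finset.sum_congr rfl fun k _ => by ring)

end Incidence

section Hessian

variable {n m : ℕ} {e1 e2 : Fin m → Fin (n + 1)} {w : Fin m → ℝ}
  {bhat h kP TP Vbar : Fin (n + 1) → ℝ} {φbar : Fin n → ℝ}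

theorem isSymm_Amat (η : Fin m → ℝ) : (Amat e1 e2 w bhat η).IsSymm := by
  refine IsSymm.ext fun i j => ?_
  by_cases hij : i = j
  · rw [hij]
  · simp only [Amat, of_apply, if_neg hij, if_neg (Ne.symm hij), or_comm]

theorem bigHessian_eq_fromBlocks : bigHessian e1 e2 w bhat h kP TP Vbar φbar =
    let W := diagonal (fun i => (Vbar i)⁻¹) * absD e1 e2
    let γ := fun k => w k * Vbar (e1 k) * Vbar (e2 k)
    fromBlocks (D1 e1 e2 * diagonal (fun k => γ k * cos (etabar e1 e2 φbar k)) * (D1 e1 e2)ᵀ)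
      (fromCols 0 (D1 e1 e2 * diagonal (fun k => γ k * sin (etabar e1 e2 φbar k)) * Wᵀ))
      (fromRows 0 (W * diagonal (fun k => γ k * sin (etabar e1 e2 φbar k)) * (D1 e1 e2)ᵀ))
      (fromBlocks (diagonal fun i => (kP i)⁻¹ * TP i) 0 0
        (Amat e1 e2 w bhat (etabar e1 e2 φbar) + diagonal h)) := by
  simp only [bigHessian, Γmat, transpose_mul, diagonal_transpose, Matrix.mul_assoc,
    diagonal_mul_diagonal, mul_comm (sin _)]

theorem isHermitian_bigHessian : (bigHessian e1 e2 w bhat h kP TP Vbar φbar).IsHermitian := by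
  rw [isHermitian_iff_isSymm, bigHessian_eq_fromBlocks]
  refine IsSymm.fromBlocks (isSymm_mul_diagonal_mul_transpose _ _) ?_
    (IsSymm.fromBlocks (isSymm_diagonal _) transpose_zero ((isSymm_Amat _).add (isSymm_diagonal h)))
  simp only [transpose_fromCols, transpose_zero, transpose_mul, transpose_transpose,
    diagonal_transpose, Matrix.mul_assoc]

theorem dotProduct_bigHessian_mulVec (hloop : ∀ k, e1 k ≠ e2 k) (x : Fin n → ℝ)
    (t z : Fin (n + 1) → ℝ) :
    Sum.elim x (Sum.elim t z) ⬝ᵥ bigHessian e1 e2 w bhat h kP TP Vbar φbar *ᵥ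
        Sum.elim x (Sum.elim t z)
      = ∑ k, (w k * Vbar (e1 k) * Vbar (e2 k) * cos (etabar e1 e2 φbar k)
            * ((D1 e1 e2)ᵀ *ᵥ x) k ^ 2
          + 2 * (w k * Vbar (e1 k) * Vbar (e2 k) * sin (etabar e1 e2 φbar k))
            * ((D1 e1 e2)ᵀ *ᵥ x) k * (z (e1 k) / Vbar (e1 k) + z (e2 k) / Vbar (e2 k))
          + w k * (z (e1 k) ^ 2 + z (e2 k) ^ 2
            - 2 * cos (etabar e1 e2 φbar k) * z (e1 k) * z (e2 k)))
        + ∑ i, (bhat i + h i) * z i ^ 2 + ∑ i, (kP i)⁻¹ * TP i * t i ^ 2 := by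
  have hW : ∀ k, ((diagonal (fun i => (Vbar i)⁻¹) * absD e1 e2)ᵀ *ᵥ z) k
      = z (e1 k) / Vbar (e1 k) + z (e2 k) / Vbar (e2 k) := by
    intro k
    rw [transpose_mul, diagonal_transpose, ← mulVec_mulVec, absD_transpose_mulVec (hloop k),
      mulVec_diagonal, mulVec_diagonal, inv_mul_eq_div, inv_mul_eq_div]
  rw [bigHessian_eq_fromBlocks, dotProduct_fromBlocks_mulVec,
    dotProduct_mul_diagonal_mul_transpose_mulVec, dotProduct_mul_diagonal_mul_transpose_mulVec,
    dotProduct_mul_diagonal_mul_transpose_mulVec, dotProduct_diagonal_mulVec, add_mulVec,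
    dotProduct_add, dotProduct_Amat_mulVec hloop, dotProduct_diagonal_mulVec,
    show ∀ a b c d p q r : ℝ, a + b + c + d + (p + q + r) = a + b + c + q + (p + r) + d by
      intros; ring]
  simp only [← Finset.sum_add_distrib, hW]
  congr 2 <;> refine Finset.sum_congr rfl fun k _ => by ring

/-- `m_ii - Σ_ℓ B_iℓ / cos η_{k(i,ℓ)}`, the slack in the diagonal dominance hypothesis. -/
noncomputable def dominanceMargin (e1 e2 : Fin m → Fin (n + 1)) (w : Fin m → ℝ)
    (bhat h Vbar : Fin (n + 1) → ℝ) (η : Fin m → ℝ) (i : Fin (n + 1)) : ℝ :=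
  bhat i + (∑ k, if e1 k = i ∨ e2 k = i then
      w k * (1 - Vbar (other e1 e2 k i) / Vbar i * sin (η k) ^ 2 / cos (η k)) else 0) + h i
    - ∑ k, if e1 k = i ∨ e2 k = i then w k / cos (η k) else 0

theorem sum_dominanceMargin_mul_sq (hloop : ∀ k, e1 k ≠ e2 k) (η : Fin m → ℝ)
    (z : Fin (n + 1) → ℝ) :
    ∑ i, dominanceMargin e1 e2 w bhat h Vbar η i * z i ^ 2
      = ∑ i, (bhat i + h i) * z i ^ 2
        + ∑ k, ((w k * (1 - Vbar (e2 k) / Vbar (e1 k) * sin (η k) ^ 2 / cos (η k))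
              - w k / cos (η k)) * z (e1 k) ^ 2
            + (w k * (1 - Vbar (e1 k) / Vbar (e2 k) * sin (η k) ^ 2 / cos (η k))
              - w k / cos (η k)) * z (e2 k) ^ 2) := by
  have hnode : ∀ i, dominanceMargin e1 e2 w bhat h Vbar η i * z i ^ 2
      = (bhat i + h i) * z i ^ 2 + ∑ k, if e1 k = i ∨ e2 k = i then
          (w k * (1 - Vbar (other e1 e2 k i) / Vbar i * sin (η k) ^ 2 / cos (η k))
            - w k / cos (η k)) * z i ^ 2 else 0 := by
    intro i
    rw [dominanceMargin, add_right_comm, add_sub_assoc, ← Finset.sum_sub_distrib, add_mul,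
      Finset.sum_mul]
    congr 1
    refine Finset.sum_congr rfl fun k _ => ?_
    split_ifs <;> ring
  rw [Finset.sum_congr rfl fun i _ => hnode i, Finset.sum_add_distrib, sum_sum_ite_incident hloop]
  simp only [other_left, other_right (hloop _)]

theorem edge_form_eq_sum_sq {w V₁ V₂ c s δ z₁ z₂ : ℝ} (hV₁ : V₁ ≠ 0) (hV₂ : V₂ ≠ 0) (hc : c ≠ 0)
    (hsc : s ^ 2 + c ^ 2 = 1) :
    w * V₁ * V₂ * c * δ ^ 2 + 2 * (w * V₁ * V₂ * s) * δ * (z₁ / V₁ + z₂ / V₂)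
        + w * (z₁ ^ 2 + z₂ ^ 2 - 2 * c * z₁ * z₂)
      = w * V₁ * V₂ * c * (δ + s / c * (z₁ / V₁ + z₂ / V₂)) ^ 2 + w / c * (z₁ - z₂) ^ 2
        + ((w * (1 - V₂ / V₁ * s ^ 2 / c) - w / c) * z₁ ^ 2
          + (w * (1 - V₁ / V₂ * s ^ 2 / c) - w / c) * z₂ ^ 2) := by
  field_simp
  linear_combination (-(2 * w * z₁ * z₂ * V₁ * V₂)) * hsc

theorem dotProduct_bigHessian_mulVec_eq_sum_sq (hloop : ∀ k, e1 k ≠ e2 k)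
    (hV : ∀ i, Vbar i ≠ 0) (hc : ∀ k, cos (etabar e1 e2 φbar k) ≠ 0) (x : Fin n → ℝ)
    (t z : Fin (n + 1) → ℝ) :
    Sum.elim x (Sum.elim t z) ⬝ᵥ bigHessian e1 e2 w bhat h kP TP Vbar φbar *ᵥ
        Sum.elim x (Sum.elim t z)
      = ∑ k, w k * Vbar (e1 k) * Vbar (e2 k) * cos (etabar e1 e2 φbar k)
            * (((D1 e1 e2)ᵀ *ᵥ x) k + sin (etabar e1 e2 φbar k) / cos (etabar e1 e2 φbar k)
              * (z (e1 k) / Vbar (e1 k) + z (e2 k) / Vbar (e2 k))) ^ 2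
        + ∑ k, w k / cos (etabar e1 e2 φbar k) * (z (e1 k) - z (e2 k)) ^ 2
        + ∑ i, dominanceMargin e1 e2 w bhat h Vbar (etabar e1 e2 φbar) i * z i ^ 2
        + ∑ i, (kP i)⁻¹ * TP i * t i ^ 2 := by
  rw [dotProduct_bigHessian_mulVec hloop, sum_dominanceMargin_mul_sq hloop,
    Finset.sum_congr rfl fun k _ => edge_form_eq_sum_sq (hV (e1 k)) (hV (e2 k)) (hc k)
      (sin_sq_add_cos_sq _)]
  simp only [Finset.sum_add_distrib]
  ring

end Hessian

end MicrogridHessian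

open MicrogridHessian

theorem bregman_hessian_posDef_general
    (n m : ℕ)
    (e1 e2 : Fin m → Fin (n + 1)) (hloop : ∀ k, e1 k ≠ e2 k)
    (hconn : (SimpleGraph.fromRel fun i j => ∃ k, e1 k = i ∧ e2 k = j).Connected)
    (w : Fin m → ℝ) (hw : ∀ k, 0 < w k)
    (bhat : Fin (n + 1) → ℝ)
    (kP TP : Fin (n + 1) → ℝ) (hkP : ∀ i, 0 < kP i) (hTP : ∀ i, 0 < TP i)
    (Vbar : Fin (n + 1) → ℝ) (hVbar : ∀ i, 0 < Vbar i)
    (φbar : Fin n → ℝ) (h : Fin (n + 1) → ℝ)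
    (hη : ∀ k, etabar e1 e2 φbar k ∈ Set.Ioo (-(Real.pi / 2)) (Real.pi / 2))
    (hdom : ∀ i,
      bhat i
        + (∑ k, if e1 k = i ∨ e2 k = i then
            w k * (1 - Vbar (other e1 e2 k i) / Vbar i
              * Real.sin (etabar e1 e2 φbar k) ^ 2
              / Real.cos (etabar e1 e2 φbar k)) else 0)
        + h i
      > ∑ k, if e1 k = i ∨ e2 k = i then
          w k / Real.cos (etabar e1 e2 φbar k) else 0) :
    (bigHessian e1 e2 w bhat h kP TP Vbar φbar).PosDef := by
  have hc : ∀ k, 0 < cos (etabar e1 e2 φbar k) := fun k => cos_pos_of_mem_Ioo (hη k)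
  have hedge : ∀ k, 0 < w k * Vbar (e1 k) * Vbar (e2 k) * cos (etabar e1 e2 φbar k) := fun k =>
    mul_pos (mul_pos (mul_pos (hw k) (hVbar _)) (hVbar _)) (hc k)
  have hline : ∀ k, 0 ≤ w k / cos (etabar e1 e2 φbar k) := fun k => (div_pos (hw k) (hc k)).le
  have hmargin : ∀ i, 0 < dominanceMargin e1 e2 w bhat h Vbar (etabar e1 e2 φbar) i :=
    fun i => sub_pos.mpr (hdom i)
  have hgov : ∀ i, 0 < (kP i)⁻¹ * TP i := fun i => mul_pos (inv_pos.mpr (hkP i)) (hTP i)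
  refine PosDef.of_dotProduct_mulVec_pos isHermitian_bigHessian fun v hv => ?_
  obtain ⟨x, t, z, rfl⟩ : ∃ x t z, v = Sum.elim x (Sum.elim t z) :=
    ⟨_, _, _, by ext (i | i | i) <;> rfl⟩
  rw [star_trivial, dotProduct_bigHessian_mulVec_eq_sum_sq hloop (fun i => (hVbar i).ne')
    fun k => (hc k).ne']
  obtain hz | rfl := ne_or_eq z 0
  · exact add_pos_of_pos_of_nonneg (add_pos_of_nonneg_of_pos
      (add_nonneg (sum_mul_sq_nonneg (hedge · |>.le) _) (sum_mul_sq_nonneg hline _))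
      (sum_mul_sq_pos hmargin hz)) (sum_mul_sq_nonneg (hgov · |>.le) _)
  obtain ht | rfl := ne_or_eq t 0
  · exact add_pos_of_nonneg_of_pos (add_nonneg (add_nonneg
      (sum_mul_sq_nonneg (hedge · |>.le) _) (sum_mul_sq_nonneg hline _))
      (sum_mul_sq_nonneg (hmargin · |>.le) _)) (sum_mul_sq_pos hgov ht)
  have hx : (D1 e1 e2)ᵀ *ᵥ x ≠ 0 := fun hx =>
    hv (by rw [eq_zero_of_D1_transpose_mulVec_eq_zero hloop hconn hx]; ext (i | i | i) <;> rfl)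
  simpa using sum_mul_sq_pos hedge hx

/-- Strict convexity of the Bregman storage function (Proposition 1):
if `η̄_k ∈ (−π/2, π/2)` for every edge and the diagonal dominance conditions
`m_ii > ∑_{ℓ : {i,ℓ}∈E} B_iℓ / cos η̄_{k(i,ℓ)}` hold, then the Hessian block matrix
is positive definite. -/
theorem bregman_hessian_posDef
    (n m : ℕ)
    (e1 e2 : Fin m → Fin (n + 1)) (hloop : ∀ k, e1 k ≠ e2 k)
    (hsimple : ∀ k k', k ≠ k' →
      ¬ ((e1 k = e1 k' ∧ e2 k = e2 k') ∨ (e1 k = e2 k' ∧ e2 k = e1 k')))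
    (hconn : (SimpleGraph.fromRel fun i j => ∃ k, e1 k = i ∧ e2 k = j).Connected)
    (w : Fin m → ℝ) (hw : ∀ k, 0 < w k)
    (bhat : Fin (n + 1) → ℝ) (hbhat : ∀ i, 0 ≤ bhat i)
    (kP TP : Fin (n + 1) → ℝ) (hkP : ∀ i, 0 < kP i) (hTP : ∀ i, 0 < TP i)
    (Vbar : Fin (n + 1) → ℝ) (hVbar : ∀ i, 0 < Vbar i)
    (φbar : Fin n → ℝ) (h : Fin (n + 1) → ℝ)
    (hη : ∀ k, etabar e1 e2 φbar k ∈ Set.Ioo (-(Real.pi / 2)) (Real.pi / 2))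
    (hdom : ∀ i,
      bhat i
        + (∑ k, if e1 k = i ∨ e2 k = i then
            w k * (1 - Vbar (other e1 e2 k i) / Vbar i
              * Real.sin (etabar e1 e2 φbar k) ^ 2
              / Real.cos (etabar e1 e2 φbar k)) else 0)
        + h i
      > ∑ k, if e1 k = i ∨ e2 k = i then
          w k / Real.cos (etabar e1 e2 φbar k) else 0) :
    (bigHessian e1 e2 w bhat h kP TP Vbar φbar).PosDef :=
  bregman_hessian_posDef_general n m e1 e2 hloop hconn w hw bhat kP TP hkP hTP Vbar hVbar φbar h hη
    hdom
end

section
/- Cut-set criterion for a negative direction (Lemma 4): let V̄ ∈ ℝⁿ_{>0}, φ̄ ∈ ℝ^{n−1}, h ∈ ℝⁿ, and set η̄ := D₁ᵀ φ̄. Define the symmetric (m+n)×(m+n) matrix M := [[Γ(V̄) [cos η̄], [sin η̄] Γ(V̄) |D|ᵀ [V̄]⁻¹], [[V̄]⁻¹ |D| Γ(V̄) [sin η̄], 𝒜(cos η̄) + diag(h)]], where 𝒜(cos η̄) is the symmetric n×n matrix with diagonal entries B_ii and off-diagonal entries −B_ij cos(η̄_{k(i,j)}) for {i,j} ∈ E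 (and 0 otherwise). Suppose there exists a cut-set K ⊆ E (i.e. removing the edges of K disconnects G) whose edges are pairwise non-incident (no two edges of K share an endpoint), such that for every edge k ∼ {i,j} in K one has sin²(η̄_k) > β_k cos(η̄_k), where β_k := 2·max{ (B_ii + h_i) V̄_i / (B_ij V̄_j), (B_jj + h_j) V̄_j / (B_ij V̄_i) }. Then M has a negative eigenvalue; equivalently there exists v ∈ ℝ^{m+n} with vᵀ M v < 0. -/
open Real Finset Matrix

namespace MicrogridCut

variable {n m : ℕ}

/-- Incidence matrix `D` of the oriented graph: column `k` has `+1` in row `e1 k`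
and `−1` in row `e2 k`. -/
def Dmat (e1 e2 : Fin m → Fin (n + 1)) : Matrix (Fin (n + 1)) (Fin m) ℝ :=
  Matrix.of fun i k => if e1 k = i then 1 else if e2 k = i then -1 else 0

/-- Entrywise absolute value `|D|` of the incidence matrix. -/
def absD (e1 e2 : Fin m → Fin (n + 1)) : Matrix (Fin (n + 1)) (Fin m) ℝ :=
  Matrix.of fun i k => if e1 k = i ∨ e2 k = i then 1 else 0

/-- `D₁`: the incidence matrix with its last row deleted. -/
def D1 (e1 e2 : Fin m → Fin (n + 1)) : Matrix (Fin n) (Fin m) ℝ :=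
  Matrix.of fun i k => Dmat e1 e2 i.castSucc k

/-- `η̄ := D₁ᵀ φ̄`. -/
noncomputable def etabar (e1 e2 : Fin m → Fin (n + 1)) (φbar : Fin n → ℝ) : Fin m → ℝ :=
  (D1 e1 e2)ᵀ *ᵥ φbar

/-- `Γ(V)`: diagonal with entries `B_ij V_i V_j` for edge `k ∼ {i,j}`. -/
def Γmat (e1 e2 : Fin m → Fin (n + 1)) (w : Fin m → ℝ) (V : Fin (n + 1) → ℝ) :
    Matrix (Fin m) (Fin m) ℝ :=
  Matrix.diagonal fun k => w k * V (e1 k) * V (e2 k)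

/-- `B_ii = b̂_i + ∑_{edges k incident to i} w k`. -/
def Bii (e1 e2 : Fin m → Fin (n + 1)) (w : Fin m → ℝ) (bhat : Fin (n + 1) → ℝ)
    (i : Fin (n + 1)) : ℝ :=
  bhat i + ∑ k, if e1 k = i ∨ e2 k = i then w k else 0

/-- `𝒜(cos η̄)`: diagonal entries `B_ii`, off-diagonal entries `−B_ij cos η̄_{k(i,j)}`
for `{i,j} ∈ E` and `0` otherwise. -/
noncomputable def Amat (e1 e2 : Fin m → Fin (n + 1)) (w : Fin m → ℝ)
    (bhat : Fin (n + 1) → ℝ) (η : Fin m → ℝ) :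
    Matrix (Fin (n + 1)) (Fin (n + 1)) ℝ :=
  Matrix.of fun i j =>
    if i = j then Bii e1 e2 w bhat i
    else -∑ k, (if (e1 k = i ∧ e2 k = j) ∨ (e1 k = j ∧ e2 k = i)
      then w k * Real.cos (η k) else 0)

/-- The symmetric `(m+n)×(m+n)` matrix `M` at the center of the Hessian product. -/
noncomputable def Mmat (e1 e2 : Fin m → Fin (n + 1)) (w : Fin m → ℝ)
    (bhat h : Fin (n + 1) → ℝ) (Vbar : Fin (n + 1) → ℝ) (φbar : Fin n → ℝ) :
    Matrix (Fin m ⊕ Fin (n + 1)) (Fin m ⊕ Fin (n + 1)) ℝ :=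
  Matrix.fromBlocks
    (Γmat e1 e2 w Vbar * Matrix.diagonal fun k => Real.cos (etabar e1 e2 φbar k))
    (Matrix.diagonal (fun k => Real.sin (etabar e1 e2 φbar k)) * Γmat e1 e2 w Vbar
      * (absD e1 e2)ᵀ * Matrix.diagonal fun i => (Vbar i)⁻¹)
    (Matrix.diagonal (fun i => (Vbar i)⁻¹) * absD e1 e2 * Γmat e1 e2 w Vbar
      * Matrix.diagonal fun k => Real.sin (etabar e1 e2 φbar k))
    (Amat e1 e2 w bhat (etabar e1 e2 φbar) + Matrix.diagonal h)

end MicrogridCut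

open MicrogridCut

/-! Fix an edge `k ∼ {i, j}` of the cut-set (a cut-set is nonempty) and test `M` on vectors
with edge coordinate `x` at `k`, vertex coordinates `y V̄_i`, `y V̄_j` at `i`, `j`, and zeros
elsewhere. With `G = B_ij V̄_i V̄_j` this gives the binary form
`G cos η̄_k x² + 4 G sin η̄_k x y + (P - 2 G cos η̄_k) y²`, where
`P = (B_ii + h_i) V̄_i² + (B_jj + h_j) V̄_j² ≤ β_k G`. Either `cos η̄_k < 0`, or
`sin² η̄_k > β_k cos η̄_k` makes the discriminant of this form positive; in both cases the form
takes a negative value. -/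

theorem quadForm_single_add_single_add_single {ι R : Type*} [Fintype ι] [DecidableEq ι]
    [CommRing R] {A : Matrix ι ι R} (hA : A.IsSymm) (p q r : ι) (x y z : R) :
    let v := Pi.single p x + Pi.single q y + Pi.single r z
    v ⬝ᵥ (A *ᵥ v) = A p p * x ^ 2 + A q q * y ^ 2 + A r r * z ^ 2
      + 2 * (A p q * x * y + A p r * x * z + A q r * y * z) := by
  simp only [mulVec_add, add_dotProduct, dotProduct_add, single_dotProduct, mulVec,
    dotProduct_single, hA.apply q p, hA.apply r p, hA.apply r q]
  ring

theorem exists_quadratic_neg {𝕜 : Type*} [Field 𝕜] [LinearOrder 𝕜] [IsStrictOrderedRing 𝕜]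
    {a b d : 𝕜} (h : a < 0 ∨ a * d < b ^ 2) :
    ∃ x y : 𝕜, a * x ^ 2 + 2 * b * x * y + d * y ^ 2 < 0 := by
  rcases h with ha | hdisc
  · exact ⟨1, 0, by simpa using ha⟩
  rcases lt_trichotomy a 0 with ha | rfl | ha
  · exact ⟨1, 0, by simpa using ha⟩
  · have hb : b ≠ 0 := by rintro rfl; simp at hdisc
    have hx : 2 * b * (-(d + 1) / (2 * b)) = -(d + 1) := by field_simp
    exact ⟨-(d + 1) / (2 * b), 1, by rw [mul_one, hx]; linarith⟩
  · exact ⟨-b, a, by nlinarith⟩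

theorem mul_sq_le_of_div_le {A a b w β : ℝ} (hw : 0 < w) (ha : 0 < a) (hb : 0 < b)
    (h : A * a / (w * b) ≤ β) : A * a ^ 2 ≤ β * (w * a * b) := by
  rw [div_le_iff₀ (by positivity)] at h
  nlinarith

theorem add_mul_sq_le_two_mul_max {A B a b w : ℝ} (hw : 0 < w) (ha : 0 < a) (hb : 0 < b) :
    A * a ^ 2 + B * b ^ 2 ≤ 2 * max (A * a / (w * b)) (B * b / (w * a)) * (w * a * b) := by
  have hA := mul_sq_le_of_div_le hw ha hb (le_max_left (A * a / (w * b)) (B * b / (w * a)))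
  have hB := mul_sq_le_of_div_le hw hb ha (le_max_right (A * a / (w * b)) (B * b / (w * a)))
  linarith [mul_right_comm w b a]

theorem neg_or_mul_lt_sq_of_le_of_lt {G s c P β : ℝ} (hG : 0 < G) (hP : P ≤ 2 * β * G)
    (hs : s ^ 2 > 2 * β * c) : G * c < 0 ∨ G * c * (P - 2 * G * c) < (2 * G * s) ^ 2 := by
  rcases lt_or_ge c 0 with hc | hc
  · exact .inl (mul_neg_of_pos_of_neg hG hc)
  · right
    nlinarith [mul_le_mul_of_nonneg_left hP (mul_nonneg hG.le hc), mul_pos hG hG, sq_nonneg s,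
      mul_lt_mul_of_pos_left hs (mul_pos hG hG), mul_nonneg (mul_nonneg hG.le hG.le) (sq_nonneg c)]

theorem Finset.nonempty_of_disconnects {V ι : Type*} (e1 e2 : ι → V)
    (K : Finset ι) (hconn : (SimpleGraph.fromRel fun i j => ∃ k, e1 k = i ∧ e2 k = j).Connected)
    (hcut : ¬ (SimpleGraph.fromRel fun i j => ∃ k, k ∉ K ∧ e1 k = i ∧ e2 k = j).Connected) :
    K.Nonempty := by
  rw [Finset.nonempty_iff_ne_empty]
  rintro rfl
  simp only [Finset.notMem_empty, not_false_eq_true, true_and] at hcut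
  exact hcut hconn

namespace MicrogridCut

variable {n m : ℕ} (e1 e2 : Fin m → Fin (n + 1)) (w : Fin m → ℝ) (bhat h V : Fin (n + 1) → ℝ)
  (φ : Fin n → ℝ)

theorem isSymm_Amat (η : Fin m → ℝ) : (Amat e1 e2 w bhat η).IsSymm := by
  refine IsSymm.ext fun i j => ?_
  by_cases hij : i = j
  · subst hij; rfl
  · simp only [Amat, of_apply, if_neg hij, if_neg (Ne.symm hij), or_comm]

theorem isSymm_Mmat : (Mmat e1 e2 w bhat h V φ).IsSymm := by
  refine IsSymm.fromBlocks ?_ ?_ ((isSymm_Amat ..).add (isSymm_diagonal h))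
  · simp only [Γmat, diagonal_mul_diagonal, isSymm_diagonal]
  · simp only [Γmat, transpose_mul, diagonal_transpose, transpose_transpose, Matrix.mul_assoc]

variable {e1 e2 w bhat h V φ} (k : Fin m)

theorem Mmat_inl_inl : Mmat e1 e2 w bhat h V φ (.inl k) (.inl k)
    = w k * V (e1 k) * V (e2 k) * cos (etabar e1 e2 φ k) := by
  simp [Mmat, Γmat]

theorem Mmat_inl_inr_fst : Mmat e1 e2 w bhat h V φ (.inl k) (.inr (e1 k))
    = sin (etabar e1 e2 φ k) * (w k * V (e1 k) * V (e2 k)) * (V (e1 k))⁻¹ := by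
  simp [Mmat, Γmat, absD, mul_assoc]

theorem Mmat_inl_inr_snd : Mmat e1 e2 w bhat h V φ (.inl k) (.inr (e2 k))
    = sin (etabar e1 e2 φ k) * (w k * V (e1 k) * V (e2 k)) * (V (e2 k))⁻¹ := by
  simp [Mmat, Γmat, absD, mul_assoc]

theorem Mmat_inr_inr_self (i : Fin (n + 1)) :
    Mmat e1 e2 w bhat h V φ (.inr i) (.inr i) = Bii e1 e2 w bhat i + h i := by
  simp [Mmat, Amat]

theorem Amat_apply_fst_snd {η : Fin m → ℝ} (hloop : e1 k ≠ e2 k)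
    (honly : ∀ k' ≠ k, ¬ ((e1 k' = e1 k ∧ e2 k' = e2 k) ∨ (e1 k' = e2 k ∧ e2 k' = e1 k))) :
    Amat e1 e2 w bhat η (e1 k) (e2 k) = -(w k * cos (η k)) := by
  rw [Amat, of_apply, if_neg hloop, Finset.sum_eq_single_of_mem k (mem_univ k)
    fun k' _ hk' => if_neg (honly k' hk'), if_pos (.inl ⟨rfl, rfl⟩)]

theorem Mmat_inr_inr_fst_snd (hloop : e1 k ≠ e2 k)
    (honly : ∀ k' ≠ k, ¬ ((e1 k' = e1 k ∧ e2 k' = e2 k) ∨ (e1 k' = e2 k ∧ e2 k' = e1 k))) :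
    Mmat e1 e2 w bhat h V φ (.inr (e1 k)) (.inr (e2 k)) = -(w k * cos (etabar e1 e2 φ k)) := by
  rw [Mmat, fromBlocks_apply₂₂, Matrix.add_apply, diagonal_apply_ne _ hloop, add_zero,
    Amat_apply_fst_snd k hloop honly]

variable (e1 e2 V) in
noncomputable def edgeTestVec (x y : ℝ) : Fin m ⊕ Fin (n + 1) → ℝ :=
  Pi.single (.inl k) x + Pi.single (.inr (e1 k)) (y * V (e1 k))
    + Pi.single (.inr (e2 k)) (y * V (e2 k))

theorem quadForm_Mmat_edgeTestVec (hloop : e1 k ≠ e2 k)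
    (honly : ∀ k' ≠ k, ¬ ((e1 k' = e1 k ∧ e2 k' = e2 k) ∨ (e1 k' = e2 k ∧ e2 k' = e1 k)))
    (hV₁ : V (e1 k) ≠ 0) (hV₂ : V (e2 k) ≠ 0) (x y : ℝ) :
    let G := w k * V (e1 k) * V (e2 k)
    edgeTestVec e1 e2 V k x y ⬝ᵥ (Mmat e1 e2 w bhat h V φ *ᵥ edgeTestVec e1 e2 V k x y)
      = G * cos (etabar e1 e2 φ k) * x ^ 2 + 2 * (2 * G * sin (etabar e1 e2 φ k)) * x * y
        + ((Bii e1 e2 w bhat (e1 k) + h (e1 k)) * V (e1 k) ^ 2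
          + (Bii e1 e2 w bhat (e2 k) + h (e2 k)) * V (e2 k) ^ 2
          - 2 * G * cos (etabar e1 e2 φ k)) * y ^ 2 := by
  rw [edgeTestVec, quadForm_single_add_single_add_single (isSymm_Mmat ..), Mmat_inl_inl,
    Mmat_inl_inr_fst, Mmat_inl_inr_snd, Mmat_inr_inr_self, Mmat_inr_inr_self,
    Mmat_inr_inr_fst_snd k hloop honly]
  linear_combination 2 * sin (etabar e1 e2 φ k) * (w k * V (e1 k) * V (e2 k)) * x * y
    * (mul_inv_cancel₀ hV₁ + mul_inv_cancel₀ hV₂)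

end MicrogridCut

theorem cut_set_negative_direction_general
    (n m : ℕ)
    (e1 e2 : Fin m → Fin (n + 1)) (hloop : ∀ k, e1 k ≠ e2 k)
    (hsimple : ∀ k k', k ≠ k' →
      ¬ ((e1 k = e1 k' ∧ e2 k = e2 k') ∨ (e1 k = e2 k' ∧ e2 k = e1 k')))
    (hconn : (SimpleGraph.fromRel fun i j => ∃ k, e1 k = i ∧ e2 k = j).Connected)
    (w : Fin m → ℝ) (hw : ∀ k, 0 < w k)
    (bhat : Fin (n + 1) → ℝ)
    (Vbar : Fin (n + 1) → ℝ) (hVbar : ∀ i, 0 < Vbar i)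
    (φbar : Fin n → ℝ) (h : Fin (n + 1) → ℝ)
    (K : Finset (Fin m))
    (hcut : ¬ (SimpleGraph.fromRel fun i j => ∃ k, k ∉ K ∧ e1 k = i ∧ e2 k = j).Connected)
    (hK : ∀ k ∈ K,
      Real.sin (etabar e1 e2 φbar k) ^ 2 >
        2 * max ((Bii e1 e2 w bhat (e1 k) + h (e1 k)) * Vbar (e1 k) / (w k * Vbar (e2 k)))
                ((Bii e1 e2 w bhat (e2 k) + h (e2 k)) * Vbar (e2 k) / (w k * Vbar (e1 k)))
          * Real.cos (etabar e1 e2 φbar k)) :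
    ∃ v : Fin m ⊕ Fin (n + 1) → ℝ,
      v ⬝ᵥ (Mmat e1 e2 w bhat h Vbar φbar *ᵥ v) < 0 := by
  obtain ⟨k, hk⟩ := Finset.nonempty_of_disconnects e1 e2 K hconn hcut
  have hV₁ := hVbar (e1 k)
  have hV₂ := hVbar (e2 k)
  obtain ⟨x, y, hxy⟩ := exists_quadratic_neg (neg_or_mul_lt_sq_of_le_of_lt
    (mul_pos (mul_pos (hw k) hV₁) hV₂) (add_mul_sq_le_two_mul_max (hw k) hV₁ hV₂) (hK k hk))
  refine ⟨edgeTestVec e1 e2 Vbar k x y, ?_⟩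
  rw [quadForm_Mmat_edgeTestVec k (hloop k) (fun k' hk' => hsimple k' k hk') hV₁.ne' hV₂.ne']
  exact hxy

/-- Cut-set criterion for a negative direction (Lemma 4): if there is a
cut-set `K` with pairwise non-incident edges on which `sin²(η̄_k) > β_k cos(η̄_k)`,
then `M` has a negative eigenvalue; equivalently there exists `v` with `vᵀ M v < 0`. -/
theorem cut_set_negative_direction
    (n m : ℕ)
    (e1 e2 : Fin m → Fin (n + 1)) (hloop : ∀ k, e1 k ≠ e2 k)
    (hsimple : ∀ k k', k ≠ k' →
      ¬ ((e1 k = e1 k' ∧ e2 k = e2 k') ∨ (e1 k = e2 k' ∧ e2 k = e1 k')))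
    (hconn : (SimpleGraph.fromRel fun i j => ∃ k, e1 k = i ∧ e2 k = j).Connected)
    (w : Fin m → ℝ) (hw : ∀ k, 0 < w k)
    (bhat : Fin (n + 1) → ℝ) (hbhat : ∀ i, 0 ≤ bhat i)
    (Vbar : Fin (n + 1) → ℝ) (hVbar : ∀ i, 0 < Vbar i)
    (φbar : Fin n → ℝ) (h : Fin (n + 1) → ℝ)
    (K : Finset (Fin m))
    (hcut : ¬ (SimpleGraph.fromRel fun i j => ∃ k, k ∉ K ∧ e1 k = i ∧ e2 k = j).Connected)
    (hnonincident : ∀ k ∈ K, ∀ k' ∈ K, k ≠ k' →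
      e1 k ≠ e1 k' ∧ e1 k ≠ e2 k' ∧ e2 k ≠ e1 k' ∧ e2 k ≠ e2 k')
    (hK : ∀ k ∈ K,
      Real.sin (etabar e1 e2 φbar k) ^ 2 >
        2 * max ((Bii e1 e2 w bhat (e1 k) + h (e1 k)) * Vbar (e1 k) / (w k * Vbar (e2 k)))
                ((Bii e1 e2 w bhat (e2 k) + h (e2 k)) * Vbar (e2 k) / (w k * Vbar (e1 k)))
          * Real.cos (etabar e1 e2 φbar k)) :
    ∃ v : Fin m ⊕ Fin (n + 1) → ℝ,
      v ⬝ᵥ (Mmat e1 e2 w bhat h Vbar φbar *ᵥ v) < 0 :=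
  cut_set_negative_direction_general n m e1 e2 hloop hsimple hconn w hw bhat Vbar hVbar φbar h K
    hcut hK
end

section
/- Steady-state characterization of the distributed active power controller: let L ∈ ℝ^{n×n} be symmetric positive semidefinite with kernel equal to the span of the all-ones vector 1 (the Laplacian of a connected undirected graph), let K_P = diag(k_P) be diagonal positive definite, and let P*, P, ξ ∈ ℝⁿ with 1ᵀP = 0. If L ξ = 0 and ξ = K_P (P − P*), then ξ = −(1ᵀP* / (1ᵀ K_P⁻¹ 1))·1 and P = P* − K_P⁻¹ 1 · (1ᵀP* / (1ᵀ K_P⁻¹ 1)). -/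
/-!
Since `ker L` is spanned by `1`, the condition `L ξ = 0` forces `ξ = c • 1` for some `c`, and then
`ξ = K_P (P - P*)` gives `P = P* + c • K_P⁻¹ 1`. Summing and using `1ᵀ P = 0` pins down
`c = -(1ᵀ P*) / (1ᵀ K_P⁻¹ 1)`, the denominator being positive.
-/

open Real Finset Matrix

lemma eq_add_inv_mul_of_eq_mul_sub {k c p q : ℝ} (hk : k ≠ 0) (h : c = k * (p - q)) :
    p = q + k⁻¹ * c := by
  rw [h, inv_mul_cancel_left₀ hk]
  ring

lemma eq_neg_div_of_sum_eq_zero {ι : Type*} [Fintype ι] [Nonempty ι] {k P Pstar : ι → ℝ}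
    (hk : ∀ i, 0 < k i) {c : ℝ} (hP : ∑ i, P i = 0) (hc : ∀ i, P i = Pstar i + (k i)⁻¹ * c) :
    c = -((∑ j, Pstar j) / ∑ j, (k j)⁻¹) := by
  have hpos : 0 < ∑ j, (k j)⁻¹ := sum_pos (fun j _ => inv_pos.2 (hk j)) univ_nonempty
  have hbalance : ∑ j, Pstar j + (∑ j, (k j)⁻¹) * c = 0 := by
    rw [← hP, sum_congr rfl fun i _ => hc i, sum_add_distrib, sum_mul]
  rw [← neg_div, eq_div_iff hpos.ne']
  linarith

theorem distributed_controller_steady_state_general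
    (n : ℕ) (L : Matrix (Fin n) (Fin n) ℝ)
    (hker : ∀ x : Fin n → ℝ, L *ᵥ x = 0 ↔ ∃ c : ℝ, x = fun _ => c)
    (kP : Fin n → ℝ) (hkP : ∀ i, 0 < kP i)
    (Pstar P ξ : Fin n → ℝ)
    (hP : ∑ i, P i = 0)
    (hLξ : L *ᵥ ξ = 0)
    (hξ : ∀ i, ξ i = kP i * (P i - Pstar i)) :
    (∀ i, ξ i = -((∑ j, Pstar j) / ∑ j, (kP j)⁻¹)) ∧
    (∀ i, P i = Pstar i - (kP i)⁻¹ * ((∑ j, Pstar j) / ∑ j, (kP j)⁻¹)) := by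
  obtain ⟨c, rfl⟩ := (hker ξ).1 hLξ
  rcases isEmpty_or_nonempty (Fin n) with _ | _
  · exact ⟨isEmptyElim, isEmptyElim⟩
  have hPi : ∀ i, P i = Pstar i + (kP i)⁻¹ * c :=
    fun i => eq_add_inv_mul_of_eq_mul_sub (hkP i).ne' (hξ i)
  have hc := eq_neg_div_of_sum_eq_zero hkP hP hPi
  refine ⟨fun _ => hc, fun i => ?_⟩
  rw [hPi i, hc]
  ring

/-- Steady-state characterization of the distributed active power
controller: if `L` is a symmetric positive semidefinite matrix whose kernel is the
span of the all-ones vector, `1ᵀP = 0`, `Lξ = 0` and `ξ = K_P(P − P*)`, then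
`ξ = −(1ᵀP*/(1ᵀK_P⁻¹1))·1` and `P = P* − K_P⁻¹1·(1ᵀP*/(1ᵀK_P⁻¹1))`. -/
theorem distributed_controller_steady_state
    (n : ℕ) (L : Matrix (Fin n) (Fin n) ℝ)
    (hL : L.PosSemidef)
    (hker : ∀ x : Fin n → ℝ, L *ᵥ x = 0 ↔ ∃ c : ℝ, x = fun _ => c)
    (kP : Fin n → ℝ) (hkP : ∀ i, 0 < kP i)
    (Pstar P ξ : Fin n → ℝ)
    (hP : ∑ i, P i = 0)
    (hLξ : L *ᵥ ξ = 0)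
    (hξ : ∀ i, ξ i = kP i * (P i - Pstar i)) :
    (∀ i, ξ i = -((∑ j, Pstar j) / ∑ j, (kP j)⁻¹)) ∧
    (∀ i, P i = Pstar i - (kP i)⁻¹ * ((∑ j, Pstar j) / ∑ j, (kP j)⁻¹)) :=
  distributed_controller_steady_state_general n L hker kP hkP Pstar P ξ hP hLξ hξ
end

section
/- Proportional reactive power sharing for the E-ARP controller: let L ∈ ℝ^{n×n} be symmetric positive semidefinite with kernel equal to the span of the all-ones vector 1 (the Laplacian of a connected undirected communication graph), K_Q = diag(k_Q) diagonal positive definite, θ ∈ ℝⁿ, V ∈ ℝⁿ_{>0}, and suppose at least one shunt value b̂_i is strictly positive (so that 𝒜(θ) is positive definite). If L K_Q Q(θ,V) = 0, then K_Q Q(θ,V) = α·1 with α = 1ᵀQ(θ,V) / (1ᵀ K_Q⁻¹ 1) > 0; in particular (k_Q)_i Q_i(θ,V) = (k_Q)_j Q_j(θ,V) for all i, j. -/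
open Real Finset Matrix

/-!
Since `ker L = span 1`, the hypothesis `L K_Q Q = 0` makes `k_i Q_i = c` constant; summing
`Q_i = c / k_i` gives `c = 1ᵀQ / 1ᵀK_Q⁻¹1`. This is positive because the total reactive power is
`∑ b̂_i V_i² + ½ ∑_{i,j} B_ij ((V_i - V_j)² + 2 V_i V_j (1 - cos (θ_i - θ_j)))`, a sum of
nonnegative terms with at least one positive one.
-/

namespace ReactivePower

variable {n : ℕ} {B : Fin n → Fin n → ℝ} {bhat : Fin n → ℝ} {θ V : Fin n → ℝ}

/-- The reactive power sent from bus `i` into the line `{i, j}`. -/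
noncomputable def lineQ (B : Fin n → Fin n → ℝ) (θ V : Fin n → ℝ) (i j : Fin n) : ℝ :=
  B i j * V i * (V i - V j * cos (θ i - θ j))

lemma lineQ_self (i : Fin n) : lineQ B θ V i i = 0 := by
  simp [lineQ]

lemma reactiveQ_eq_add_sum_lineQ (i : Fin n) :
    reactiveQ n B bhat θ V i = bhat i * V i ^ 2 + ∑ j, lineQ B θ V i j := by
  rw [← sum_erase univ (lineQ_self i)]
  simp only [reactiveQ, Bdiag, add_mul, sum_mul, add_sub_assoc, ← sum_sub_distrib]
  exact congrArg _ (sum_congr rfl fun j _ => by rw [lineQ]; ring)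

lemma lineQ_add_lineQ_swap {i j : Fin n} (hsymm : B i j = B j i) :
    lineQ B θ V i j + lineQ B θ V j i
      = B i j * ((V i - V j) ^ 2 + 2 * V i * V j * (1 - cos (θ i - θ j))) := by
  rw [lineQ, lineQ, ← hsymm, ← cos_neg (θ j - θ i), neg_sub]
  ring

lemma lineQ_add_lineQ_swap_nonneg {i j : Fin n} (hsymm : B i j = B j i) (hB : 0 ≤ B i j)
    (hVi : 0 ≤ V i) (hVj : 0 ≤ V j) : 0 ≤ lineQ B θ V i j + lineQ B θ V j i := by
  rw [lineQ_add_lineQ_swap hsymm]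
  have hcos : 0 ≤ 1 - cos (θ i - θ j) := sub_nonneg.mpr (cos_le_one _)
  positivity

lemma sum_sum_lineQ_nonneg (hsymm : ∀ i j, B i j = B j i) (hB : ∀ i j, 0 ≤ B i j)
    (hV : ∀ i, 0 ≤ V i) : 0 ≤ ∑ i, ∑ j, lineQ B θ V i j := by
  have hpair : 2 * ∑ i, ∑ j, lineQ B θ V i j
      = ∑ i, ∑ j, (lineQ B θ V i j + lineQ B θ V j i) := by
    simp only [sum_add_distrib]
    rw [sum_comm (f := fun j i => lineQ B θ V i j)]
    ring
  have : 0 ≤ ∑ i, ∑ j, (lineQ B θ V i j + lineQ B θ V j i) :=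
    sum_nonneg fun i _ => sum_nonneg fun j _ =>
      lineQ_add_lineQ_swap_nonneg (hsymm i j) (hB i j) (hV i) (hV j)
  linarith

lemma sum_reactiveQ_pos (hsymm : ∀ i j, B i j = B j i) (hB : ∀ i j, 0 ≤ B i j)
    (hbhat : ∀ i, 0 ≤ bhat i) (hone : ∃ i, 0 < bhat i) (hV : ∀ i, 0 < V i) :
    0 < ∑ i, reactiveQ n B bhat θ V i := by
  obtain ⟨i₀, hi₀⟩ := hone
  have hshunt : 0 < ∑ i, bhat i * V i ^ 2 :=
    lt_of_lt_of_le (by have := hV i₀; positivity)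
      (single_le_sum (fun i _ => mul_nonneg (hbhat i) (sq_nonneg (V i))) (mem_univ i₀))
  have hlines := sum_sum_lineQ_nonneg (θ := θ) hsymm hB fun i => (hV i).le
  simp only [reactiveQ_eq_add_sum_lineQ, sum_add_distrib]
  linarith

end ReactivePower

lemma eq_sum_div_sum_inv_of_forall_mul_eq {ι : Type*} [Fintype ι] [Nonempty ι] {k x : ι → ℝ}
    {c : ℝ} (hk : ∀ i, 0 < k i) (h : ∀ i, k i * x i = c) :
    c = (∑ i, x i) / ∑ i, (k i)⁻¹ := by
  have hx : ∀ i, x i = c * (k i)⁻¹ := fun i => by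
    rw [← h i, mul_comm (k i), mul_inv_cancel_right₀ (hk i).ne']
  have hpos : 0 < ∑ i, (k i)⁻¹ := sum_pos (fun i _ => inv_pos.mpr (hk i)) univ_nonempty
  rw [sum_congr rfl fun i _ => hx i, ← mul_sum, mul_div_cancel_right₀ _ hpos.ne']

open ReactivePower in
theorem earp_reactive_power_sharing_general
    (n : ℕ) (G : SimpleGraph (Fin n))
    (B : Fin n → Fin n → ℝ)
    (hBsymm : ∀ i j, B i j = B j i)
    (hBpos : ∀ i j, G.Adj i j → 0 < B i j)
    (hBzero : ∀ i j, ¬ G.Adj i j → B i j = 0)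
    (bhat : Fin n → ℝ) (hbhat : ∀ i, 0 ≤ bhat i)
    (hone : ∃ i, 0 < bhat i)
    (L : Matrix (Fin n) (Fin n) ℝ)
    (hker : ∀ x : Fin n → ℝ, L *ᵥ x = 0 ↔ ∃ c : ℝ, x = fun _ => c)
    (kQ : Fin n → ℝ) (hkQ : ∀ i, 0 < kQ i)
    (θ V : Fin n → ℝ) (hV : ∀ i, 0 < V i)
    (hLQ : (L *ᵥ fun i => kQ i * reactiveQ n B bhat θ V i) = 0) :
    (∀ i, kQ i * reactiveQ n B bhat θ V i
        = (∑ j, reactiveQ n B bhat θ V j) / ∑ j, (kQ j)⁻¹) ∧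
    (0 < (∑ j, reactiveQ n B bhat θ V j) / ∑ j, (kQ j)⁻¹) ∧
    (∀ i j, kQ i * reactiveQ n B bhat θ V i = kQ j * reactiveQ n B bhat θ V j) := by
  obtain ⟨c, hc⟩ := (hker _).mp hLQ
  have hshare : ∀ i, kQ i * reactiveQ n B bhat θ V i = c := fun i => congrFun hc i
  have hBnn : ∀ i j, 0 ≤ B i j := fun i j => by
    by_cases h : G.Adj i j
    exacts [(hBpos i j h).le, (hBzero i j h).ge]
  have : Nonempty (Fin n) := hone.nonempty
  have hc_eq := eq_sum_div_sum_inv_of_forall_mul_eq hkQ hshare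
  refine ⟨fun i => (hshare i).trans hc_eq, ?_, fun i j => (hshare i).trans (hshare j).symm⟩
  exact div_pos (sum_reactiveQ_pos hBsymm hBnn hbhat hone hV)
    (sum_pos (fun j _ => inv_pos.mpr (hkQ j)) univ_nonempty)

/-- Proportional reactive power sharing for the E-ARP controller:
if `L K_Q Q(θ,V) = 0` with `L` a Laplacian of a connected communication graph, then
`K_Q Q(θ,V) = α·1` with `α = 1ᵀQ/(1ᵀK_Q⁻¹1) > 0`; in particular
`(k_Q)_i Q_i = (k_Q)_j Q_j` for all `i, j`. -/
theorem earp_reactive_power_sharing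
    (n : ℕ) (G : SimpleGraph (Fin n)) [DecidableRel G.Adj]
    (hconn : G.Connected)
    (B : Fin n → Fin n → ℝ)
    (hBsymm : ∀ i j, B i j = B j i)
    (hBpos : ∀ i j, G.Adj i j → 0 < B i j)
    (hBzero : ∀ i j, ¬ G.Adj i j → B i j = 0)
    (bhat : Fin n → ℝ) (hbhat : ∀ i, 0 ≤ bhat i)
    (hone : ∃ i, 0 < bhat i)
    (L : Matrix (Fin n) (Fin n) ℝ)
    (hL : L.PosSemidef)
    (hker : ∀ x : Fin n → ℝ, L *ᵥ x = 0 ↔ ∃ c : ℝ, x = fun _ => c)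
    (kQ : Fin n → ℝ) (hkQ : ∀ i, 0 < kQ i)
    (θ V : Fin n → ℝ) (hV : ∀ i, 0 < V i)
    (hLQ : (L *ᵥ fun i => kQ i * reactiveQ n B bhat θ V i) = 0) :
    (∀ i, kQ i * reactiveQ n B bhat θ V i
        = (∑ j, reactiveQ n B bhat θ V j) / ∑ j, (kQ j)⁻¹) ∧
    (0 < (∑ j, reactiveQ n B bhat θ V j) / ∑ j, (kQ j)⁻¹) ∧
    (∀ i j, kQ i * reactiveQ n B bhat θ V i = kQ j * reactiveQ n B bhat θ V j) :=
  earp_reactive_power_sharing_general n G B hBsymm hBpos hBzero bhat hbhat hone L hker kQ hkQ θ V hV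
    hLQ
end

section
/- Conserved quantity of the E-ARP voltage dynamics: let K_Q = diag(k_Q) be diagonal positive definite and L ∈ ℝ^{n×n} satisfy 1ᵀ L = 0 (e.g. a Laplacian matrix). Suppose V : ℝ → ℝⁿ is differentiable with V_i(t) > 0 for all t and all i, and there exists q : ℝ → ℝⁿ such that V′(t) = −[V(t)] K_Q L K_Q q(t) for all t. Then the function t ↦ Σ_i (k_Q)_i⁻¹ ln V_i(t) is constant. -/
/-!
Along the flow, `d/dt ln V_i = V_i' / V_i = -(k_Q)_i (L K_Q q)_i`, so the weight `(k_Q)_i⁻¹` leaves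
`-(L K_Q q)_i`, and these sum to `-(1ᵀ L) K_Q q = 0`. A function with zero derivative is constant.
-/

open Real Finset Matrix

theorem Matrix.sum_mulVec_eq_zero_of_sum_col_eq_zero {ι R : Type*} [Fintype ι]
    [NonUnitalNonAssocSemiring R] (L : Matrix ι ι R) (hL : ∀ j, ∑ i, L i j = 0) (x : ι → R) :
    ∑ i, (L *ᵥ x) i = 0 := by
  simp only [mulVec, dotProduct]
  rw [Finset.sum_comm]
  simp [← Finset.sum_mul, hL]

theorem hasDerivAt_sum_mul_log {ι : Type*} [Fintype ι] (c : ι → ℝ) {f : ℝ → ι → ℝ} {t : ℝ}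
    (hf : ∀ i, DifferentiableAt ℝ (fun s => f s i) t) (hne : ∀ i, f t i ≠ 0) :
    HasDerivAt (fun u => ∑ i, c i * log (f u i))
      (∑ i, c i * (deriv (fun s => f s i) t / f t i)) t :=
  HasDerivAt.fun_sum fun i _ => ((hf i).hasDerivAt.log (hne i)).const_mul (c i)

/-- Conserved quantity of the E-ARP voltage dynamics: if `1ᵀL = 0`,
`V` is differentiable, positive, and `V′ = −[V] K_Q L K_Q q(t)`, then
`t ↦ ∑ i (k_Q)_i⁻¹ ln V_i(t)` is constant. -/
theorem earp_conserved_quantity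
    (n : ℕ) (kQ : Fin n → ℝ) (hkQ : ∀ i, 0 < kQ i)
    (L : Matrix (Fin n) (Fin n) ℝ) (hL : ∀ j, ∑ i, L i j = 0)
    (V : ℝ → Fin n → ℝ) (q : ℝ → Fin n → ℝ)
    (hdiff : ∀ i, Differentiable ℝ fun t => V t i)
    (hpos : ∀ t i, 0 < V t i)
    (hode : ∀ t i, deriv (fun s => V s i) t
      = -(V t i * (kQ i * (L *ᵥ fun j => kQ j * q t j) i))) :
    ∀ t s : ℝ, ∑ i, (kQ i)⁻¹ * Real.log (V t i) = ∑ i, (kQ i)⁻¹ * Real.log (V s i) := by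
  have hderiv : ∀ t, HasDerivAt (fun u => ∑ i, (kQ i)⁻¹ * log (V u i)) 0 t := by
    intro t
    convert hasDerivAt_sum_mul_log (fun i => (kQ i)⁻¹) (fun i => hdiff i t)
      (fun i => (hpos t i).ne') using 1
    have hweighted : ∀ i, (kQ i)⁻¹ * (deriv (fun s => V s i) t / V t i)
        = -(L *ᵥ fun j => kQ j * q t j) i := by
      intro i
      rw [hode t i]
      field_simp [(hpos t i).ne', (hkQ i).ne']
    rw [Finset.sum_congr rfl fun i _ => hweighted i, Finset.sum_neg_distrib,
      L.sum_mulVec_eq_zero_of_sum_col_eq_zero hL, neg_zero]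
  intro t s
  exact is_const_of_deriv_eq_zero (fun u => (hderiv u).differentiableAt)
    (fun u => (hderiv u).deriv) t s
end
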